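/- arXiv:0905.1879 — 4 statements merged into one kernel-verified Lean document; each statement's English description precedes it below -/
import Mathlib

section
/- Let C be an exact category with an involution * in which every morphism has a Moore–Penrose generalized inverse with respect to *. For every morphism f with domain A, let u = ker f be a kernel of f and set i = u ∘ u^(−1), where u^(−1) is the Moore–Penrose inverse of u. Then i is a projection on A, and for every morphism g into A one has f ∘ g = 0 if and only if g = i ∘ h for some morphism h. In particular, C is a Baer*-category with f′ = ker f ∘ (ker f)^(−1). -/
open CategoryTheory CategoryTheory.Limits

universe v u

/-- An operation assigning to each morphism a morphism in the opposite direction. -/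
def MorphismOp (C : Type u) [Category.{v} C] : Type (max u v) :=
  ∀ {A B : C}, (A ⟶ B) → (B ⟶ A)

variable {C : Type u} [Category.{v} C]

/-- `s` is an involution: a contravariant endofunctor which is the identity on objects
and involutive on morphisms. -/
def IsInvolution (s : MorphismOp C) : Prop :=
  (∀ {A B D : C} (f : A ⟶ B) (g : B ⟶ D), s (f ≫ g) = s g ≫ s f) ∧
  (∀ A : C, s (𝟙 A) = 𝟙 A) ∧
  (∀ {A B : C} (f : A ⟶ B), s (s f) = f)

/-- A projection on `A` is an idempotent endomorphism fixed by the involution `s`. -/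
def IsProjection (s : MorphismOp C) {A : C} (i : A ⟶ A) : Prop :=
  i ≫ i = i ∧ s i = i

/-- `g` is a Moore–Penrose generalized inverse of `f` with respect to `s`:
`f g f = f`, `g f g = g`, `(f g)* = f g`, `(g f)* = g f`. -/
def IsMoorePenrose (s : MorphismOp C) {A B : C} (f : A ⟶ B) (g : B ⟶ A) : Prop :=
  f ≫ g ≫ f = f ∧ g ≫ f ≫ g = g ∧ s (f ≫ g) = f ≫ g ∧ s (g ≫ f) = g ≫ f

/-- `inv` makes `C` an inverse category: each morphism `f` has `inv f` as its unique
generalized inverse (`f ∘ (inv f) ∘ f = f` and `(inv f) ∘ f ∘ (inv f) = inv f`). -/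
def IsInverseOp (inv : MorphismOp C) : Prop :=
  ∀ {A B : C} (f : A ⟶ B),
    (f ≫ inv f ≫ f = f ∧ inv f ≫ f ≫ inv f = inv f) ∧
    ∀ g : B ⟶ A, f ≫ g ≫ f = f → g ≫ f ≫ g = g → g = inv f

/-- `u` is a kernel of `f`. -/
def IsKernelOf [HasZeroMorphisms C] {K A B : C} (u : K ⟶ A) (f : A ⟶ B) : Prop :=
  u ≫ f = 0 ∧ ∀ {X : C} (g : X ⟶ A), g ≫ f = 0 → ∃! h : X ⟶ K, h ≫ u = g

/-- `v` is a cokernel of `f`. -/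
def IsCokernelOf [HasZeroMorphisms C] {A B Q : C} (v : B ⟶ Q) (f : A ⟶ B) : Prop :=
  f ≫ v = 0 ∧ ∀ {X : C} (g : B ⟶ X), f ≫ g = 0 → ∃! h : Q ⟶ X, v ≫ h = g

/-- An exact category (in the sense of the paper): a category with a zero object,
kernels and cokernels, in which every monomorphism is a kernel, every epimorphism is a
cokernel, and every morphism factors as a monomorphism composed with an epimorphism. -/
structure IsExactCategory (C : Type u) [Category.{v} C] [HasZeroObject C]
    [HasZeroMorphisms C] : Prop where
  hasKernels : ∀ {A B : C} (f : A ⟶ B), ∃ (K : C) (u : K ⟶ A), IsKernelOf u f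
  hasCokernels : ∀ {A B : C} (f : A ⟶ B), ∃ (Q : C) (v : B ⟶ Q), IsCokernelOf v f
  normal : ∀ {X A : C} (u : X ⟶ A), Mono u → ∃ (B : C) (f : A ⟶ B), IsKernelOf u f
  conormal : ∀ {A B : C} (v : A ⟶ B), Epi v → ∃ (X : C) (f : X ⟶ A), IsCokernelOf v f
  monoEpiFact : ∀ {A B : C} (f : A ⟶ B),
    ∃ (I : C) (q : A ⟶ I) (p : I ⟶ B), Epi q ∧ Mono p ∧ q ≫ p = f

/-- A Baer*-structure on `C` with respect to `s`: each morphism `f` has a projection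
`f′ = prj f` on its domain with `f ∘ g = 0` iff `g` factors through `f′`. -/
structure BaerStar (C : Type u) [Category.{v} C] [HasZeroObject C] [HasZeroMorphisms C]
    (s : MorphismOp C) where
  prj : ∀ {A B : C}, (A ⟶ B) → (A ⟶ A)
  prj_isProjection : ∀ {A B : C} (f : A ⟶ B), IsProjection s (prj f)
  prj_spec : ∀ {A B X : C} (f : A ⟶ B) (g : X ⟶ A),
    g ≫ f = 0 ↔ ∃ h : X ⟶ A, g = h ≫ prj f

/-- The natural partial order on projections: `e ≤ f` iff `e = e ∘ f`. -/
def ProjLe {A : C} (e f : A ⟶ A) : Prop := f ≫ e = e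

/-- `p` is the image of `g`: the smallest subobject of the codomain of `g` through
which `g` factors. -/
def IsImageOf {A B I : C} (p : I ⟶ B) (g : A ⟶ B) : Prop :=
  Mono p ∧ (∃ t : A ⟶ I, t ≫ p = g) ∧
  ∀ {S : C} (t : A ⟶ S) (m : S ⟶ B), Mono m → t ≫ m = g → ∃ w : I ⟶ S, w ≫ m = p

theorem IsMoorePenrose.isProjection_comp {s : MorphismOp C} {A B : C} {u : A ⟶ B}
    {v : B ⟶ A} (huv : IsMoorePenrose s u v) : IsProjection s (v ≫ u) :=
  ⟨by rw [Category.assoc, huv.1], huv.2.2.2⟩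

/-- Since `u = (u ≫ v) ≫ u`, factoring through `v ≫ u` is the same as factoring through `u`. -/
theorem IsKernelOf.comp_eq_zero_iff [HasZeroMorphisms C] {K A B : C} {u : K ⟶ A}
    {f : A ⟶ B} (hu : IsKernelOf u f) {v : A ⟶ K} (huv : u ≫ v ≫ u = u) {X : C}
    (g : X ⟶ A) : g ≫ f = 0 ↔ ∃ h : X ⟶ A, g = h ≫ v ≫ u := by
  constructor
  · intro hg
    obtain ⟨h, rfl, -⟩ := hu.2 g hg
    exact ⟨h ≫ u, by rw [Category.assoc, huv]⟩
  · rintro ⟨h, rfl⟩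
    simp only [Category.assoc, hu.1, comp_zero]

noncomputable def baerStarOfKernels [HasZeroObject C] [HasZeroMorphisms C]
    (s : MorphismOp C) (mp : MorphismOp C)
    (hmp : ∀ {A B : C} (f : A ⟶ B), IsMoorePenrose s f (mp f))
    (hker : ∀ {A B : C} (f : A ⟶ B), ∃ (K : C) (u : K ⟶ A), IsKernelOf u f) :
    BaerStar C s where
  prj f := mp (hker f).choose_spec.choose ≫ (hker f).choose_spec.choose
  prj_isProjection _ := (hmp _).isProjection_comp
  prj_spec f := (hker f).choose_spec.choose_spec.comp_eq_zero_iff (hmp _).1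

theorem stmt1_general [HasZeroObject C] [HasZeroMorphisms C] (s : MorphismOp C)
    (mp : MorphismOp C)
    (hmp : ∀ {A B : C} (f : A ⟶ B), IsMoorePenrose s f (mp f))
    (hC : IsExactCategory C)
    {A B K : C} (f : A ⟶ B) (u : K ⟶ A) (hu : IsKernelOf u f) :
    (IsProjection s (mp u ≫ u) ∧
      ∀ {X : C} (g : X ⟶ A), g ≫ f = 0 ↔ ∃ h : X ⟶ A, g = h ≫ (mp u ≫ u)) ∧
    Nonempty (BaerStar C s) :=
  ⟨⟨(hmp u).isProjection_comp, hu.comp_eq_zero_iff (hmp u).1⟩,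
    ⟨baerStarOfKernels s mp hmp hC.hasKernels⟩⟩

/-- In an exact category with involution and Moore–Penrose inverses,
for any morphism `f` with kernel `u`, the morphism `i = u ∘ u⁻¹` is a projection and
`f ∘ g = 0` iff `g` factors through `i`; in particular `C` is a Baer*-category with
`f′ = ker f ∘ (ker f)⁻¹`. -/
theorem stmt1 [HasZeroObject C] [HasZeroMorphisms C] (s : MorphismOp C)
    (hs : IsInvolution s) (mp : MorphismOp C)
    (hmp : ∀ {A B : C} (f : A ⟶ B), IsMoorePenrose s f (mp f))
    (hC : IsExactCategory C)
    {A B K : C} (f : A ⟶ B) (u : K ⟶ A) (hu : IsKernelOf u f) :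
    (IsProjection s (mp u ≫ u) ∧
      ∀ {X : C} (g : X ⟶ A), g ≫ f = 0 ↔ ∃ h : X ⟶ A, g = h ≫ (mp u ≫ u)) ∧
    Nonempty (BaerStar C s) :=
  stmt1_general s mp hmp hC f u hu
end

section
/- Let C be a Baer*-category in which every morphism has a Moore–Penrose generalized inverse with respect to the involution *, every projection is closed, and every projection can be written as a monomorphism composed with an epimorphism. Let f be a morphism of C. If f′ = p₁ ∘ q₁ is a factorization with p₁ a monomorphism and q₁ an epimorphism, then p₁ is a kernel of f; if (f*)′ = p₂ ∘ q₂ is a factorization with p₂ a monomorphism and q₂ an epimorphism, then q₂ is a cokernel of f. -/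
/-!
The projection `e = f′` satisfies `f ∘ e = 0` and `e ∘ g = g` whenever `f ∘ g = 0`; for any
mono-epi factorization `e = p ∘ q` this makes `p` a kernel of `f`. Dually, `e = (f*)′` satisfies
`e ∘ f = 0` (apply `*` to `f* ∘ e = 0`, using `e* = e`) and `g ∘ e = g` whenever `g ∘ f = 0`,
which makes `q` a cokernel of `f`.
-/

open CategoryTheory CategoryTheory.Limits

universe v u

variable {C : Type u} [Category.{v} C]

section

variable [HasZeroMorphisms C]

theorem isKernelOf_of_factorization {A B I : C} {f : A ⟶ B} {e : A ⟶ A} {q : A ⟶ I}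
    {p : I ⟶ A} [Epi q] [Mono p] (hqp : q ≫ p = e) (he : e ≫ f = 0)
    (hfix : ∀ {X : C} (g : X ⟶ A), g ≫ f = 0 → g ≫ e = g) : IsKernelOf p f := by
  refine ⟨?_, fun g hg => ⟨g ≫ q, ?_, fun h hh => ?_⟩⟩
  · rw [← cancel_epi q, ← Category.assoc, hqp, he, comp_zero]
  · show (g ≫ q) ≫ p = g
    rw [Category.assoc, hqp, hfix g hg]
  · rw [← cancel_mono p, hh, Category.assoc, hqp, hfix g hg]

theorem isCokernelOf_of_factorization {A B I : C} {f : A ⟶ B} {e : B ⟶ B} {q : B ⟶ I}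
    {p : I ⟶ B} [Epi q] [Mono p] (hqp : q ≫ p = e) (he : f ≫ e = 0)
    (hfix : ∀ {X : C} (g : B ⟶ X), f ≫ g = 0 → e ≫ g = g) : IsCokernelOf q f := by
  refine ⟨?_, fun g hg => ⟨p ≫ g, ?_, fun h hh => ?_⟩⟩
  · rw [← cancel_mono p, Category.assoc, hqp, he, zero_comp]
  · show q ≫ p ≫ g = g
    rw [← Category.assoc, hqp, hfix g hg]
  · rw [← cancel_epi q, hh, ← Category.assoc, hqp, hfix g hg]

end

namespace IsInvolution

variable {s : MorphismOp C}

theorem map_comp (hs : IsInvolution s) {A B D : C} (f : A ⟶ B) (g : B ⟶ D) :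
    s (f ≫ g) = s g ≫ s f :=
  hs.1 f g

theorem map_map (hs : IsInvolution s) {A B : C} (f : A ⟶ B) : s (s f) = f :=
  hs.2.2 f

theorem map_eq_iff (hs : IsInvolution s) {A B : C} {f g : A ⟶ B} : s f = s g ↔ f = g :=
  ⟨fun h => by rw [← hs.map_map f, h, hs.map_map], congrArg _⟩

theorem map_zero [HasZeroMorphisms C] (hs : IsInvolution s) {X Y : C} :
    s (0 : X ⟶ Y) = 0 := by
  calc s (0 : X ⟶ Y) = s ((0 : X ⟶ Y) ≫ s (0 : Y ⟶ Y)) := by rw [zero_comp]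
    _ = 0 := by rw [hs.map_comp, hs.map_map, zero_comp]

end IsInvolution

namespace BaerStar

variable [HasZeroObject C] [HasZeroMorphisms C] {s : MorphismOp C} (Bs : BaerStar C s)

theorem map_prj {A B : C} (f : A ⟶ B) : s (Bs.prj f) = Bs.prj f :=
  (Bs.prj_isProjection f).2

theorem prj_comp {A B : C} (f : A ⟶ B) : Bs.prj f ≫ f = 0 :=
  (Bs.prj_spec f _).mpr ⟨𝟙 A, (Category.id_comp _).symm⟩

theorem comp_prj_of_comp_eq_zero {X A B : C} {f : A ⟶ B} {g : X ⟶ A} (hg : g ≫ f = 0) :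
    g ≫ Bs.prj f = g := by
  obtain ⟨h, rfl⟩ := (Bs.prj_spec f g).mp hg
  rw [Category.assoc, (Bs.prj_isProjection f).1]

theorem comp_prj_map {A B : C} (hs : IsInvolution s) (f : A ⟶ B) :
    f ≫ Bs.prj (s f) = 0 := by
  rw [← hs.map_eq_iff, hs.map_comp, Bs.map_prj (s f), Bs.prj_comp, hs.map_zero]

theorem prj_map_comp_of_comp_eq_zero {A B X : C} (hs : IsInvolution s) {f : A ⟶ B}
    {g : B ⟶ X} (hg : f ≫ g = 0) : Bs.prj (s f) ≫ g = g := by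
  have hsg : s g ≫ s f = 0 := by rw [← hs.map_comp, hg, hs.map_zero]
  rw [← hs.map_eq_iff, hs.map_comp, Bs.map_prj (s f),
    Bs.comp_prj_of_comp_eq_zero hsg]

end BaerStar

theorem stmt3_general [HasZeroObject C] [HasZeroMorphisms C] (s : MorphismOp C)
    (hs : IsInvolution s) (Bs : BaerStar C s)
    {A B : C} (f : A ⟶ B) :
    (∀ {I₁ : C} (q₁ : A ⟶ I₁) (p₁ : I₁ ⟶ A), Epi q₁ → Mono p₁ →
      q₁ ≫ p₁ = Bs.prj f → IsKernelOf p₁ f) ∧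
    (∀ {I₂ : C} (q₂ : B ⟶ I₂) (p₂ : I₂ ⟶ B), Epi q₂ → Mono p₂ →
      q₂ ≫ p₂ = Bs.prj (s f) → IsCokernelOf q₂ f) :=
  ⟨fun _ _ _ _ hqp => isKernelOf_of_factorization hqp (Bs.prj_comp f)
      fun _ => Bs.comp_prj_of_comp_eq_zero,
    fun _ _ _ _ hqp => isCokernelOf_of_factorization hqp (Bs.comp_prj_map hs f)
      fun _ => Bs.prj_map_comp_of_comp_eq_zero hs⟩

/-- In a Baer*-category with Moore–Penrose inverses, closed projections
and mono-epi factorizations of projections: if `f′ = p₁ ∘ q₁` (p₁ mono, q₁ epi) then `p₁`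
is a kernel of `f`; if `(f*)′ = p₂ ∘ q₂` (p₂ mono, q₂ epi) then `q₂` is a cokernel of `f`. -/
theorem stmt3 [HasZeroObject C] [HasZeroMorphisms C] (s : MorphismOp C)
    (hs : IsInvolution s) (mp : MorphismOp C)
    (hmp : ∀ {A B : C} (f : A ⟶ B), IsMoorePenrose s f (mp f))
    (Bs : BaerStar C s)
    (hclosed : ∀ {A : C} (i : A ⟶ A), IsProjection s i → Bs.prj (Bs.prj i) = i)
    (hfact : ∀ {A : C} (i : A ⟶ A), IsProjection s i →
      ∃ (I : C) (q : A ⟶ I) (p : I ⟶ A), Epi q ∧ Mono p ∧ q ≫ p = i)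
    {A B : C} (f : A ⟶ B) :
    (∀ {I₁ : C} (q₁ : A ⟶ I₁) (p₁ : I₁ ⟶ A), Epi q₁ → Mono p₁ →
      q₁ ≫ p₁ = Bs.prj f → IsKernelOf p₁ f) ∧
    (∀ {I₂ : C} (q₂ : B ⟶ I₂) (p₂ : I₂ ⟶ B), Epi q₂ → Mono p₂ →
      q₂ ≫ p₂ = Bs.prj (s f) → IsCokernelOf q₂ f) :=
  stmt3_general s hs Bs f
end

section
/- Let C be an exact inverse category and f : A → B a morphism of C. If f is a monomorphism then the image function P(f) : P(A) → P(B) is injective, and if f is an epimorphism then P(f) is surjective. -/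
open CategoryTheory CategoryTheory.Limits

universe v u

variable {C : Type u} [Category.{v} C]

/-! A monomorphism `f` of an inverse category is split by `f⁻¹`: cancelling `f` in
`f f⁻¹ f = f` gives `f⁻¹ f = 1`, so `i ↦ f i f⁻¹` can be undone by conjugating with `f⁻¹`.
Dually an epimorphism satisfies `f f⁻¹ = 1`, and then `j ↦ f⁻¹ j f` sends a projection `j`
to an idempotent with image `j` under `P(f)`; idempotents of an inverse category are
self-inverse by uniqueness of generalized inverses, hence projections. -/

namespace IsInverseOp

variable {inv : MorphismOp C} (hinv : IsInverseOp inv)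
include hinv

theorem comp_inv_of_mono {A B : C} (f : A ⟶ B) [Mono f] : f ≫ inv f = 𝟙 A :=
  (cancel_mono f).1 (by simpa using (hinv f).1.1)

theorem inv_comp_of_epi {A B : C} (f : A ⟶ B) [Epi f] : inv f ≫ f = 𝟙 B :=
  (cancel_epi f).1 (by simpa using (hinv f).1.1)

theorem inv_eq_self_of_idem {A : C} {e : A ⟶ A} (he : e ≫ e = e) : inv e = e :=
  ((hinv e).2 e (by rw [he, he]) (by rw [he, he])).symm

theorem isProjection_iff_idem {A : C} {e : A ⟶ A} : IsProjection inv e ↔ e ≫ e = e :=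
  ⟨And.left, fun he => ⟨he, hinv.inv_eq_self_of_idem he⟩⟩

end IsInverseOp

theorem idem_conj_of_comp_eq_id {A B : C} {f : A ⟶ B}
    {g : B ⟶ A} (hgf : g ≫ f = 𝟙 B) {j : B ⟶ B} (hj : j ≫ j = j) :
    (f ≫ j ≫ g) ≫ f ≫ j ≫ g = f ≫ j ≫ g := by
  simp [reassoc_of% hgf, reassoc_of% hj]

theorem stmt8_general (inv : MorphismOp C)
    (hinv : IsInverseOp inv) {A B : C} (f : A ⟶ B) :
    (Mono f → ∀ i j : A ⟶ A, IsProjection inv i → IsProjection inv j →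
      inv f ≫ i ≫ f = inv f ≫ j ≫ f → i = j) ∧
    (Epi f → ∀ j : B ⟶ B, IsProjection inv j →
      ∃ i : A ⟶ A, IsProjection inv i ∧ inv f ≫ i ≫ f = j) := by
  constructor
  · intro _ i j _ _ h
    have hfg := hinv.comp_inv_of_mono f
    refine (cancel_mono f).1 ?_
    simpa only [← Category.assoc, hfg, Category.id_comp] using f ≫= h
  · intro _ j hj
    have hgf := hinv.inv_comp_of_epi f
    refine ⟨f ≫ j ≫ inv f, hinv.isProjection_iff_idem.2 (idem_conj_of_comp_eq_id hgf hj.1), ?_⟩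
    simp [reassoc_of% hgf, hgf]

/-- In an exact inverse category, if `f` is a monomorphism then the
image function `P(f) : P(A) → P(B)`, `i ↦ f ∘ i ∘ f*`, is injective, and if `f` is an
epimorphism then `P(f)` is surjective. -/
theorem stmt8 [HasZeroObject C] [HasZeroMorphisms C] (inv : MorphismOp C)
    (hinv : IsInverseOp inv) (hC : IsExactCategory C) {A B : C} (f : A ⟶ B) :
    (Mono f → ∀ i j : A ⟶ A, IsProjection inv i → IsProjection inv j →
      inv f ≫ i ≫ f = inv f ≫ j ≫ f → i = j) ∧
    (Epi f → ∀ j : B ⟶ B, IsProjection inv j →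
      ∃ i : A ⟶ A, IsProjection inv i ∧ inv f ≫ i ≫ f = j) :=
  stmt8_general inv hinv f
end

section
/- Let C be an exact inverse category and f : A → B a morphism of C. Then: (i) P′(f)(j₁ ∘ j₂) = P′(f)(j₁) ∘ P′(f)(j₂) for all projections j₁, j₂ on B; (ii) j₁ ≤ j₂ implies P′(f)(j₁) ≤ P′(f)(j₂); (iii) f′ ≤ P′(f)(j) for every projection j on B; (iv) if f ∘ f* ≤ j then P′(f)(j) = 1_A. -/
open CategoryTheory CategoryTheory.Limits

universe v u

variable {C : Type u} [Category.{v} C]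

/-!
Idempotents of an inverse category commute, so projections compose to projections and
`g ≫ e ≫ k = g` splits into `g ≫ e = g` and `g ≫ k = g`; an idempotent is moreover determined
by the morphisms it fixes. In a Baer*-category, `g` is fixed by `f′` iff `g ≫ f = 0`, and
exactness makes every idempotent `j` closed, `j″ = j`: factor `j = q ≫ m` with `m` a kernel of
some `g`; then `j = g′`, and `g‴ = g′` holds in any Baer*-category. Hence `g` is fixed by
`P′(f)(j)` iff `g ≫ f` is fixed by `j`, from which all four properties follow.
-/

namespace IsInverseOp

variable {inv : MorphismOp C}

theorem comp_inv_comp (hinv : IsInverseOp inv) {A B : C} (f : A ⟶ B) : f ≫ inv f ≫ f = f :=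
  (hinv f).1.1

theorem inv_comp_inv (hinv : IsInverseOp inv) {A B : C} (f : A ⟶ B) :
    inv f ≫ f ≫ inv f = inv f :=
  (hinv f).1.2

theorem eq_inv (hinv : IsInverseOp inv) {A B : C} {f : A ⟶ B} {g : B ⟶ A}
    (h₁ : f ≫ g ≫ f = f) (h₂ : g ≫ f ≫ g = g) : g = inv f :=
  (hinv f).2 g h₁ h₂

theorem inv_inv (hinv : IsInverseOp inv) {A B : C} (f : A ⟶ B) : inv (inv f) = f :=
  (IsInverseOp.eq_inv hinv (IsInverseOp.inv_comp_inv hinv f)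
    (IsInverseOp.comp_inv_comp hinv f)).symm

theorem inv_eq_self (hinv : IsInverseOp inv) {A : C} {e : A ⟶ A} (he : e ≫ e = e) :
    inv e = e :=
  (IsInverseOp.eq_inv hinv (by rw [he, he]) (by rw [he, he])).symm

theorem comp_inv_idem (hinv : IsInverseOp inv) {A B : C} (f : A ⟶ B) :
    (f ≫ inv f) ≫ f ≫ inv f = f ≫ inv f := by
  rw [Category.assoc, IsInverseOp.inv_comp_inv hinv]

theorem inv_comp_idem (hinv : IsInverseOp inv) {A B : C} (f : A ⟶ B) :
    (inv f ≫ f) ≫ inv f ≫ f = inv f ≫ f := by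
  rw [Category.assoc, IsInverseOp.comp_inv_comp hinv]

/-- `x := (e ≫ k)⁻¹` equals `k ≫ x ≫ e` by uniqueness of inverses, which makes `x`, and hence
`e ≫ k = x⁻¹`, idempotent. -/
theorem idem_comp_idem (hinv : IsInverseOp inv) {A : C} {e k : A ⟶ A} (he : e ≫ e = e)
    (hk : k ≫ k = k) : (e ≫ k) ≫ e ≫ k = e ≫ k := by
  have h₁ := IsInverseOp.comp_inv_comp hinv (e ≫ k)
  have h₂ := IsInverseOp.inv_comp_inv hinv (e ≫ k)
  have h₃ := IsInverseOp.inv_inv hinv (e ≫ k)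
  generalize hx : inv (e ≫ k) = x at h₁ h₂ h₃
  have hkxe : k ≫ x ≫ e = x := by
    refine (IsInverseOp.eq_inv hinv ?_ ?_).trans hx
    · simpa only [Category.assoc, reassoc_of% he, reassoc_of% hk] using h₁
    · simpa only [Category.assoc, reassoc_of% he, reassoc_of% hk]
        using congrArg (k ≫ · ≫ e) h₂
  have hxx : x ≫ x = x :=
    calc x ≫ x = k ≫ (x ≫ (e ≫ k) ≫ x) ≫ e := by
          conv_lhs => rw [← hkxe]
          simp only [Category.assoc]
      _ = x := by rw [h₂, hkxe]
  have hek : e ≫ k = x := h₃.symm.trans (IsInverseOp.inv_eq_self hinv hxx)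
  rw [hek, hxx]

theorem idem_comm (hinv : IsInverseOp inv) {A : C} {e k : A ⟶ A} (he : e ≫ e = e)
    (hk : k ≫ k = k) : e ≫ k = k ≫ e := by
  have hke : k ≫ e = inv (e ≫ k) := by
    refine IsInverseOp.eq_inv hinv ?_ ?_
    · simpa only [Category.assoc, reassoc_of% he, reassoc_of% hk]
        using IsInverseOp.idem_comp_idem hinv he hk
    · simpa only [Category.assoc, reassoc_of% he, reassoc_of% hk]
        using IsInverseOp.idem_comp_idem hinv hk he
  rw [hke, IsInverseOp.inv_eq_self hinv (IsInverseOp.idem_comp_idem hinv he hk)]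

theorem projLe_iff (hinv : IsInverseOp inv) {A : C} {e k : A ⟶ A} (he : e ≫ e = e)
    (hk : k ≫ k = k) : ProjLe e k ↔ e ≫ k = e := by
  rw [ProjLe, IsInverseOp.idem_comm hinv hk he]

theorem comp_comp_eq_self_iff (hinv : IsInverseOp inv) {A X : C} {e k : A ⟶ A}
    (he : e ≫ e = e) (hk : k ≫ k = k) (y : X ⟶ A) :
    y ≫ e ≫ k = y ↔ y ≫ e = y ∧ y ≫ k = y := by
  refine ⟨fun h => ⟨?_, ?_⟩, fun ⟨h₁, h₂⟩ => by rw [reassoc_of% h₁, h₂]⟩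
  · calc y ≫ e = (y ≫ e ≫ k) ≫ e := by rw [h]
      _ = y ≫ e ≫ k := by
        simp only [Category.assoc]
        rw [← IsInverseOp.idem_comm hinv he hk, reassoc_of% he]
      _ = y := h
  · calc y ≫ k = (y ≫ e ≫ k) ≫ k := by rw [h]
      _ = y := by rw [Category.assoc, Category.assoc, hk, h]

theorem eq_of_forall_comp_eq_self_iff (hinv : IsInverseOp inv) {A : C} {e k : A ⟶ A}
    (he : e ≫ e = e) (hk : k ≫ k = k)
    (h : ∀ {X : C} (g : X ⟶ A), g ≫ e = g ↔ g ≫ k = g) : e = k := by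
  rw [← (h e).1 he, IsInverseOp.idem_comm hinv he hk, (h k).2 hk]

end IsInverseOp

namespace BaerStar

variable [HasZeroObject C] [HasZeroMorphisms C] {inv : MorphismOp C}

theorem prj_idem (Bs : BaerStar C inv) {A B : C} (f : A ⟶ B) :
    Bs.prj f ≫ Bs.prj f = Bs.prj f :=
  (Bs.prj_isProjection f).1

theorem prj_comp_self (Bs : BaerStar C inv) {A B : C} (f : A ⟶ B) : Bs.prj f ≫ f = 0 :=
  (Bs.prj_spec f _).2 ⟨𝟙 A, (Category.id_comp _).symm⟩

theorem comp_eq_zero_iff (Bs : BaerStar C inv) {A B X : C} (f : A ⟶ B) (g : X ⟶ A) :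
    g ≫ f = 0 ↔ g ≫ Bs.prj f = g := by
  refine ⟨fun h => ?_, fun h => by rw [← h, Category.assoc, prj_comp_self, comp_zero]⟩
  obtain ⟨h, rfl⟩ := (Bs.prj_spec f g).1 h
  rw [Category.assoc, prj_idem]

theorem prj_zero (Bs : BaerStar C inv) {A B : C} : Bs.prj (0 : A ⟶ B) = 𝟙 A := by
  simpa using (Bs.comp_eq_zero_iff (0 : A ⟶ B) (𝟙 A)).1 comp_zero

theorem prj_comp_prj_prj (Bs : BaerStar C inv) (hinv : IsInverseOp inv) {A B : C}
    (f : A ⟶ B) : Bs.prj f ≫ Bs.prj (Bs.prj f) = 0 := by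
  rw [IsInverseOp.idem_comm hinv (Bs.prj_idem _) (Bs.prj_idem _), prj_comp_self]

/-- The idempotent `f ≫ f⁻¹` commutes with `f′`, hence is annihilated by it and fixed by `f″`. -/
theorem prj_prj_comp_self (Bs : BaerStar C inv) (hinv : IsInverseOp inv) {A B : C}
    (f : A ⟶ B) : Bs.prj (Bs.prj f) ≫ f = f := by
  have hr := IsInverseOp.comp_inv_idem hinv f
  have hr' : (f ≫ inv f) ≫ Bs.prj (Bs.prj f) = f ≫ inv f := by
    rw [← comp_eq_zero_iff, ← IsInverseOp.idem_comm hinv (Bs.prj_idem f) hr,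
      reassoc_of% prj_comp_self, zero_comp]
  calc Bs.prj (Bs.prj f) ≫ f = Bs.prj (Bs.prj f) ≫ (f ≫ inv f) ≫ f := by
        rw [Category.assoc, IsInverseOp.comp_inv_comp hinv]
    _ = ((f ≫ inv f) ≫ Bs.prj (Bs.prj f)) ≫ f := by
        rw [IsInverseOp.idem_comm hinv hr (Bs.prj_idem _)]
        simp only [Category.assoc]
    _ = f := by rw [hr', Category.assoc, IsInverseOp.comp_inv_comp hinv]

theorem prj_prj_prj (Bs : BaerStar C inv) (hinv : IsInverseOp inv) {A B : C} (f : A ⟶ B) :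
    Bs.prj (Bs.prj (Bs.prj f)) = Bs.prj f := by
  refine IsInverseOp.eq_of_forall_comp_eq_self_iff hinv (Bs.prj_idem _) (Bs.prj_idem _)
    fun g => ?_
  rw [← Bs.comp_eq_zero_iff (Bs.prj (Bs.prj f)), ← Bs.comp_eq_zero_iff f]
  constructor
  · intro h
    rw [← Bs.prj_prj_comp_self hinv f, reassoc_of% h, zero_comp]
  · intro h
    rw [← (Bs.comp_eq_zero_iff f g).1 h, Category.assoc, Bs.prj_comp_prj_prj hinv, comp_zero]

end BaerStar

section Exact

variable [HasZeroObject C] [HasZeroMorphisms C] {inv : MorphismOp C}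

theorem IsExactCategory.exists_eq_prj (hC : IsExactCategory C) (hinv : IsInverseOp inv)
    (Bs : BaerStar C inv) {A : C} {j : A ⟶ A} (hj : j ≫ j = j) :
    ∃ (D : C) (g : A ⟶ D), j = Bs.prj g := by
  obtain ⟨I, q, m, hq, hm, rfl⟩ := hC.monoEpiFact j
  have hmqm : m ≫ q ≫ m = m := (cancel_epi q).1 (by simpa only [Category.assoc] using hj)
  obtain ⟨D, g, hmg, hlift⟩ := hC.normal m hm
  refine ⟨D, g, IsInverseOp.eq_of_forall_comp_eq_self_iff hinv hj (Bs.prj_idem g) fun x => ?_⟩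
  rw [← Bs.comp_eq_zero_iff]
  constructor
  · intro hx
    rw [← hx, Category.assoc, Category.assoc, hmg, comp_zero, comp_zero]
  · intro hx
    obtain ⟨h, rfl, -⟩ := hlift x hx
    rw [Category.assoc, hmqm]

namespace BaerStar

theorem prj_prj_eq_self (Bs : BaerStar C inv) (hinv : IsInverseOp inv)
    (hC : IsExactCategory C) {A : C} {j : A ⟶ A} (hj : j ≫ j = j) : Bs.prj (Bs.prj j) = j := by
  obtain ⟨D, g, rfl⟩ := hC.exists_eq_prj hinv Bs hj
  exact Bs.prj_prj_prj hinv g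

/-- The inverse image `P′(f)(j) = (j′ ∘ f)′`. -/
def invImage (Bs : BaerStar C inv) {A B : C} (f : A ⟶ B) (j : B ⟶ B) : A ⟶ A :=
  Bs.prj (f ≫ Bs.prj j)

theorem invImage_idem (Bs : BaerStar C inv) {A B : C} (f : A ⟶ B) (j : B ⟶ B) :
    Bs.invImage f j ≫ Bs.invImage f j = Bs.invImage f j :=
  Bs.prj_idem _

theorem comp_invImage_eq_self_iff (Bs : BaerStar C inv) (hinv : IsInverseOp inv)
    (hC : IsExactCategory C) {A B X : C} (f : A ⟶ B) {j : B ⟶ B} (hj : j ≫ j = j)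
    (g : X ⟶ A) : g ≫ Bs.invImage f j = g ↔ (g ≫ f) ≫ j = g ≫ f := by
  rw [invImage, ← comp_eq_zero_iff, ← Category.assoc, comp_eq_zero_iff,
    Bs.prj_prj_eq_self hinv hC hj]

theorem invImage_comp (Bs : BaerStar C inv) (hinv : IsInverseOp inv) (hC : IsExactCategory C)
    {A B : C} (f : A ⟶ B) {j₁ j₂ : B ⟶ B} (hj₁ : j₁ ≫ j₁ = j₁) (hj₂ : j₂ ≫ j₂ = j₂) :
    Bs.invImage f (j₁ ≫ j₂) = Bs.invImage f j₁ ≫ Bs.invImage f j₂ := by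
  refine IsInverseOp.eq_of_forall_comp_eq_self_iff hinv (Bs.invImage_idem f _)
    (IsInverseOp.idem_comp_idem hinv (Bs.invImage_idem f j₁) (Bs.invImage_idem f j₂))
    fun g => ?_
  rw [Bs.comp_invImage_eq_self_iff hinv hC f (IsInverseOp.idem_comp_idem hinv hj₁ hj₂),
    IsInverseOp.comp_comp_eq_self_iff hinv hj₁ hj₂,
    IsInverseOp.comp_comp_eq_self_iff hinv (Bs.invImage_idem f j₁) (Bs.invImage_idem f j₂),
    Bs.comp_invImage_eq_self_iff hinv hC f hj₁, Bs.comp_invImage_eq_self_iff hinv hC f hj₂]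

theorem invImage_mono (Bs : BaerStar C inv) (hinv : IsInverseOp inv) (hC : IsExactCategory C)
    {A B : C} (f : A ⟶ B) {j₁ j₂ : B ⟶ B} (hj₁ : j₁ ≫ j₁ = j₁) (hj₂ : j₂ ≫ j₂ = j₂)
    (hle : ProjLe j₁ j₂) : ProjLe (Bs.invImage f j₁) (Bs.invImage f j₂) := by
  rw [IsInverseOp.projLe_iff hinv hj₁ hj₂] at hle
  rw [IsInverseOp.projLe_iff hinv (Bs.invImage_idem f j₁) (Bs.invImage_idem f j₂),
    ← Bs.invImage_comp hinv hC f hj₁ hj₂, hle]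

theorem prj_le_invImage (Bs : BaerStar C inv) (hinv : IsInverseOp inv) {A B : C}
    (f : A ⟶ B) (j : B ⟶ B) : ProjLe (Bs.prj f) (Bs.invImage f j) := by
  rw [IsInverseOp.projLe_iff hinv (Bs.prj_idem f) (Bs.invImage_idem f j), invImage,
    ← comp_eq_zero_iff, reassoc_of% prj_comp_self, zero_comp]

theorem invImage_eq_id (Bs : BaerStar C inv) (hinv : IsInverseOp inv) (hC : IsExactCategory C)
    {A B : C} (f : A ⟶ B) {j : B ⟶ B} (hj : j ≫ j = j) (hle : ProjLe (inv f ≫ f) j) :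
    Bs.invImage f j = 𝟙 A := by
  rw [IsInverseOp.projLe_iff hinv (IsInverseOp.inv_comp_idem hinv f) hj,
    ← Bs.comp_invImage_eq_self_iff hinv hC f hj, invImage, ← comp_eq_zero_iff] at hle
  rw [invImage, ← IsInverseOp.comp_inv_comp hinv f, Category.assoc, Category.assoc, hle,
    comp_zero, prj_zero]

end BaerStar

end Exact

/-- In an exact inverse category, `P′(f)` is a homomorphism of meet
semilattices of projections, is order preserving, satisfies `f′ ≤ P′(f)(j)` for every
projection `j` on `B`, and `P′(f)(j) = 1` whenever `f ∘ f* ≤ j`. -/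
theorem stmt15 [HasZeroObject C] [HasZeroMorphisms C] (inv : MorphismOp C)
    (hinv : IsInverseOp inv) (hC : IsExactCategory C) (Bs : BaerStar C inv)
    {A B : C} (f : A ⟶ B) :
    (∀ j₁ j₂ : B ⟶ B, IsProjection inv j₁ → IsProjection inv j₂ →
      Bs.prj (f ≫ Bs.prj (j₁ ≫ j₂)) =
        Bs.prj (f ≫ Bs.prj j₁) ≫ Bs.prj (f ≫ Bs.prj j₂)) ∧
    (∀ j₁ j₂ : B ⟶ B, IsProjection inv j₁ → IsProjection inv j₂ → ProjLe j₁ j₂ →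
      ProjLe (Bs.prj (f ≫ Bs.prj j₁)) (Bs.prj (f ≫ Bs.prj j₂))) ∧
    (∀ j : B ⟶ B, IsProjection inv j → ProjLe (Bs.prj f) (Bs.prj (f ≫ Bs.prj j))) ∧
    (∀ j : B ⟶ B, IsProjection inv j → ProjLe (inv f ≫ f) j →
      Bs.prj (f ≫ Bs.prj j) = 𝟙 A) :=
  ⟨fun _ _ h₁ h₂ => Bs.invImage_comp hinv hC f h₁.1 h₂.1,
    fun _ _ h₁ h₂ => Bs.invImage_mono hinv hC f h₁.1 h₂.1,
    fun j _ => Bs.prj_le_invImage hinv f j,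
    fun _ hj => Bs.invImage_eq_id hinv hC f hj.1⟩
end
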